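/- Let φ, φ' : ℝ → ℤ be finitely presented functions. Then ∫_ℝ |φ(t) − φ'(t)| dt ≤ d(φ, φ'), as an inequality in [0, +∞]; in particular, if d(φ, φ') < ∞ then φ − φ' is integrable on ℝ. -/
import Mathlib


open MeasureTheory
open scoped Classical ENNReal

/-- Indicator of `Q_u = [u, ∞)` on `ℝ`. -/
noncomputable def indR (u t : ℝ) : ℤ := if u ≤ t then 1 else 0

/-- `(P, N)` is a decomposition of `φ` if `φ = Σ_{u ∈ P} 1_{[u,∞)} − Σ_{v ∈ N} 1_{[v,∞)}`. -/
def IsDecompR (φ : ℝ → ℤ) (P N : Multiset ℝ) : Prop :=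
  ∀ t, φ t = (P.map fun u => indR u t).sum - (N.map fun u => indR u t).sum

/-- A function `φ : ℝ → ℤ` is finitely presented if it admits a decomposition. -/
def FinitelyPresentedR (φ : ℝ → ℤ) : Prop := ∃ P N, IsDecompR φ P N

/-- The signed 1-Wasserstein distance between finitely presented functions on `ℝ`:
the infimum in `[0,∞]` over decompositions `(P,N)` of `φ`, `(P',N')` of `φ'` and
multiset bijections `h : P ⊔ N' → N ⊔ P'` (encoded as a multiset `pr` of pairs)
of the cost `Σ_u |u − h u|`; the infimum of the empty set is `+∞`. -/
noncomputable def signedDistR (φ φ' : ℝ → ℤ) : ℝ≥0∞ :=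
  sInf { c : ℝ≥0∞ | ∃ (P N P' N' : Multiset ℝ) (pr : Multiset (ℝ × ℝ)),
      IsDecompR φ P N ∧ IsDecompR φ' P' N' ∧
      pr.map Prod.fst = P + N' ∧ pr.map Prod.snd = N + P' ∧
      c = ENNReal.ofReal ((pr.map fun uv => |uv.1 - uv.2|).sum) }

lemma ind_abs_eq (u v : ℝ) :
    (fun t => ENNReal.ofReal |((indR u t - indR v t : ℤ) : ℝ)|) =
      (Set.Ico (min u v) (max u v)).indicator (fun _ => (1 : ℝ≥0∞)) := by
  funext t
  by_cases h1 : u ≤ t <;> by_cases h2 : v ≤ t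
  · have hm : t ∉ Set.Ico (min u v) (max u v) :=
      fun h => absurd h.2 (not_lt.mpr (max_le h1 h2))
    simp [indR, h1, h2, Set.indicator_of_notMem hm]
  · have hm : t ∈ Set.Ico (min u v) (max u v) :=
      ⟨(min_le_left u v).trans h1, lt_of_lt_of_le (not_le.mp h2) (le_max_right u v)⟩
    simp [indR, h1, h2, Set.indicator_of_mem hm]
  · have hm : t ∈ Set.Ico (min u v) (max u v) :=
      ⟨(min_le_right u v).trans h2, lt_of_lt_of_le (not_le.mp h1) (le_max_left u v)⟩
    simp [indR, h1, h2, Set.indicator_of_mem hm]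
  · have hm : t ∉ Set.Ico (min u v) (max u v) :=
      fun h => absurd h.1 (not_le.mpr (lt_min (not_le.mp h1) (not_le.mp h2)))
    simp [indR, h1, h2, Set.indicator_of_notMem hm]

lemma key (u v : ℝ) :
    (∫⁻ t, ENNReal.ofReal |((indR u t - indR v t : ℤ) : ℝ)|) = ENNReal.ofReal |u - v| := by
  rw [ind_abs_eq]
  show (∫⁻ t, (Set.Ico (min u v) (max u v)).indicator (fun _ => (1 : ℝ≥0∞)) t) = _
  rw [lintegral_indicator measurableSet_Ico]
  simp [Real.volume_Ico, max_sub_min_eq_abs, abs_sub_comm]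

lemma meas_term (u v : ℝ) :
    Measurable fun t => ENNReal.ofReal |((indR u t - indR v t : ℤ) : ℝ)| := by
  rw [ind_abs_eq]
  exact measurable_const.indicator measurableSet_Ico

lemma meas_cast_ind (u : ℝ) : Measurable fun t => ((indR u t : ℤ) : ℝ) := by
  simp only [indR, apply_ite (fun n : ℤ => (n : ℝ))]
  exact Measurable.ite measurableSet_Ici measurable_const measurable_const

lemma meas_sum (s : Multiset ℝ) :
    Measurable fun t => (((s.map fun u => indR u t).sum : ℤ) : ℝ) := by
  induction s using Multiset.induction with
  | empty => simp only [Multiset.map_zero, Multiset.sum_zero, Int.cast_zero]; exact measurable_const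
  | cons a s ih =>
    simp only [Multiset.map_cons, Multiset.sum_cons, Int.cast_add]
    exact (meas_cast_ind a).add ih

lemma multiset_abs_sum_le {α} (s : Multiset α) (f : α → ℤ) :
    |(s.map f).sum| ≤ (s.map fun a => |f a|).sum := by
  induction s using Multiset.induction with
  | empty => simp
  | cons a s ih =>
    simp only [Multiset.map_cons, Multiset.sum_cons]
    exact (abs_add_le _ _).trans (by gcongr)

lemma ofReal_multiset_sum {α} (s : Multiset α) (f : α → ℝ) (hf : ∀ a, 0 ≤ f a) :
    ENNReal.ofReal ((s.map f).sum) = (s.map fun a => ENNReal.ofReal (f a)).sum := by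
  induction s using Multiset.induction with
  | empty => simp
  | cons a s ih =>
    simp only [Multiset.map_cons, Multiset.sum_cons]
    rw [ENNReal.ofReal_add (hf a) (Multiset.sum_nonneg (by
      intro x hx; obtain ⟨b, _, rfl⟩ := Multiset.mem_map.mp hx; exact hf b)), ih]

lemma cast_multiset_sum {α} (s : Multiset α) (f : α → ℤ) :
    (((s.map f).sum : ℤ) : ℝ) = (s.map fun a => ((f a : ℤ) : ℝ)).sum := by
  induction s using Multiset.induction with
  | empty => simp
  | cons a s ih => simp [ih]

lemma lint_sum (pr : Multiset (ℝ × ℝ)) :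
    (∫⁻ t, (pr.map fun uv => ENNReal.ofReal |((indR uv.1 t - indR uv.2 t : ℤ) : ℝ)|).sum)
      = (pr.map fun uv => ENNReal.ofReal |uv.1 - uv.2|).sum := by
  induction pr using Multiset.induction with
  | empty => simp
  | cons a s ih =>
    simp only [Multiset.map_cons, Multiset.sum_cons]
    rw [lintegral_add_left (meas_term a.1 a.2), key, ih]


/-- For finitely presented `φ, φ' : ℝ → ℤ`,
`∫_ℝ |φ − φ'| ≤ d(φ, φ')` in `[0, +∞]`; in particular, if `d(φ, φ') < ∞` then `φ − φ'`
is integrable on `ℝ`. -/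
theorem stmt3 (φ φ' : ℝ → ℤ)
    (hφ : FinitelyPresentedR φ) (hφ' : FinitelyPresentedR φ') :
    (∫⁻ t, ENNReal.ofReal |((φ t - φ' t : ℤ) : ℝ)|) ≤ signedDistR φ φ' ∧
      (signedDistR φ φ' < ⊤ → Integrable (fun t => ((φ t - φ' t : ℤ) : ℝ))) := by
  have hle : (∫⁻ t, ENNReal.ofReal |((φ t - φ' t : ℤ) : ℝ)|) ≤ signedDistR φ φ' := by
    apply le_sInf
    rintro c ⟨P, N, P', N', pr, hP, hP', hfst, hsnd, rfl⟩
    have hpt : ∀ t, φ t - φ' t = (pr.map fun uv => indR uv.1 t - indR uv.2 t).sum := by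
      intro t
      have h1 : (pr.map fun uv => indR uv.1 t).sum
          = (P.map fun u => indR u t).sum + (N'.map fun u => indR u t).sum := by
        rw [show (pr.map fun uv => indR uv.1 t) = (pr.map Prod.fst).map fun u => indR u t by
          rw [Multiset.map_map]; rfl, hfst, Multiset.map_add, Multiset.sum_add]
      have h2 : (pr.map fun uv => indR uv.2 t).sum
          = (N.map fun u => indR u t).sum + (P'.map fun u => indR u t).sum := by
        rw [show (pr.map fun uv => indR uv.2 t) = (pr.map Prod.snd).map fun u => indR u t by
          rw [Multiset.map_map]; rfl, hsnd, Multiset.map_add, Multiset.sum_add]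
      rw [hP t, hP' t, Multiset.sum_map_sub, h1, h2]
      ring
    have hbd : ∀ t, ENNReal.ofReal |((φ t - φ' t : ℤ) : ℝ)|
        ≤ (pr.map fun uv => ENNReal.ofReal |((indR uv.1 t - indR uv.2 t : ℤ) : ℝ)|).sum := by
      intro t
      rw [hpt t]
      have hZ := multiset_abs_sum_le pr (fun uv => indR uv.1 t - indR uv.2 t)
      have hR : |(((pr.map fun uv => indR uv.1 t - indR uv.2 t).sum : ℤ) : ℝ)|
          ≤ (((pr.map fun uv => |indR uv.1 t - indR uv.2 t|).sum : ℤ) : ℝ) := by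
        rw [← Int.cast_abs]; exact_mod_cast hZ
      calc ENNReal.ofReal |(((pr.map fun uv => indR uv.1 t - indR uv.2 t).sum : ℤ) : ℝ)|
          ≤ ENNReal.ofReal (((pr.map fun uv => |indR uv.1 t - indR uv.2 t|).sum : ℤ) : ℝ) :=
            ENNReal.ofReal_le_ofReal hR
        _ = (pr.map fun uv => ENNReal.ofReal |((indR uv.1 t - indR uv.2 t : ℤ) : ℝ)|).sum := by
            rw [cast_multiset_sum]
            rw [ofReal_multiset_sum _ _ (fun a => by positivity)]
            congr 1
            exact Multiset.map_congr rfl fun a _ => by rw [Int.cast_abs]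
    calc (∫⁻ t, ENNReal.ofReal |((φ t - φ' t : ℤ) : ℝ)|)
        ≤ ∫⁻ t, (pr.map fun uv =>
            ENNReal.ofReal |((indR uv.1 t - indR uv.2 t : ℤ) : ℝ)|).sum :=
          lintegral_mono hbd
      _ = (pr.map fun uv => ENNReal.ofReal |uv.1 - uv.2|).sum := lint_sum pr
      _ = ENNReal.ofReal ((pr.map fun uv => |uv.1 - uv.2|).sum) :=
          (ofReal_multiset_sum _ _ (fun a => abs_nonneg _)).symm
  refine ⟨hle, fun hfin => ?_⟩
  obtain ⟨P, N, hP⟩ := hφ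
  obtain ⟨P', N', hP'⟩ := hφ'
  have hmeas : Measurable fun t => ((φ t - φ' t : ℤ) : ℝ) := by
    have : (fun t => ((φ t - φ' t : ℤ) : ℝ)) = fun t =>
        ((((P.map fun u => indR u t).sum : ℤ) : ℝ) - (((N.map fun u => indR u t).sum : ℤ) : ℝ))
        - ((((P'.map fun u => indR u t).sum : ℤ) : ℝ)
          - (((N'.map fun u => indR u t).sum : ℤ) : ℝ)) := by
      funext t; rw [hP t, hP' t]; push_cast; ring
    rw [this]
    exact ((meas_sum P).sub (meas_sum N)).sub ((meas_sum P').sub (meas_sum N'))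
  refine ⟨hmeas.aestronglyMeasurable, ?_⟩
  rw [hasFiniteIntegral_iff_norm]
  simp only [Real.norm_eq_abs]
  exact lt_of_le_of_lt hle hfin
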